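/- (Key one-batch bound) For any ε' ∈ (0,1) and number of cycles K' ≥ 1 of Osborne's cyclic algorithm starting at arbitrary u_0 ∈ ℝⁿ, there exists t ∈ {1, ..., K'} such that ‖∇φ(u_t)‖₁ / φ(u_t) ≤ ε' + 10 φ(u_0) / (ε' K' φ(u_{K'})). -/

import Mathlib

/-!
Exact minimisation in the coordinate `u_m` balances row and column `m` and lowers `φ` by
`(√r_m - √c_m)²`, while it moves the other row and column sums by `|r_m - c_m|` in total.
So after one cycle the imbalance is at most the sum `S` of the `|r_m - c_m|` met during the
cycle, and Cauchy–Schwarz gives `S² ≤ 2 (2φ + S) · (drop of φ)`, whence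
`‖∇φ(u_{k+1})‖₁² ≤ 16 φ(u_k) (φ(u_k) - φ(u_{k+1}))`. Among the first `K'` cycles some drop is
at most `φ(u_0) / K'`, and at that cycle the inequality gives the bound by AM–GM.
-/

open Real Finset

noncomputable def rowSum {n : ℕ} (A : Matrix (Fin n) (Fin n) ℝ) (u : Fin n → ℝ) (j : Fin n) : ℝ :=
  ∑ i, Real.exp (u j - u i) * A j i

noncomputable def colSum {n : ℕ} (A : Matrix (Fin n) (Fin n) ℝ) (u : Fin n → ℝ) (j : Fin n) : ℝ :=
  ∑ i, Real.exp (u i - u j) * A i j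

noncomputable def potential {n : ℕ} (A : Matrix (Fin n) (Fin n) ℝ) (u : Fin n → ℝ) : ℝ :=
  ∑ i, ∑ j, Real.exp (u i - u j) * A i j

/-- One Osborne update: balance the j-th row/column pair. -/
noncomputable def osborneUpdate {n : ℕ} (A : Matrix (Fin n) (Fin n) ℝ)
    (u : Fin n → ℝ) (j : Fin n) : Fin n → ℝ :=
  Function.update u j
    (u j + (1 / 2) * (Real.log (colSum A u j) - Real.log (rowSum A u j)))

/-- One full cycle of Osborne's algorithm, updating coordinates 0, 1, ..., n-1 in order. -/
noncomputable def osborneCycle {n : ℕ} (A : Matrix (Fin n) (Fin n) ℝ)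
    (u : Fin n → ℝ) : Fin n → ℝ :=
  (List.finRange n).foldl (fun w j => osborneUpdate A w j) u

/-- End-of-cycle iterates of cyclic Osborne started at u0. -/
noncomputable def osborneIter {n : ℕ} (A : Matrix (Fin n) (Fin n) ℝ)
    (u0 : Fin n → ℝ) (k : ℕ) : Fin n → ℝ :=
  (osborneCycle A)^[k] u0

lemma add_sq_le_add_mul_add {a b c a' b' c' : ℝ} (hb : 0 ≤ b) (hc : 0 ≤ c) (hb' : 0 ≤ b')
    (hc' : 0 ≤ c') (h : a ^ 2 ≤ b * c) (h' : a' ^ 2 ≤ b' * c') :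
    (a + a') ^ 2 ≤ (b + b') * (c + c') := by
  have hcross : a * a' ≤ (b * c' + b' * c) / 2 := by
    refine abs_le_of_sq_le_sq' ?_ (by positivity) |>.2
    calc (a * a') ^ 2 = a ^ 2 * a' ^ 2 := by ring
      _ ≤ (b * c) * (b' * c') := mul_le_mul h h' (sq_nonneg _) (by positivity)
      _ ≤ ((b * c' + b' * c) / 2) ^ 2 := by nlinarith [sq_nonneg (b * c' - b' * c)]
  nlinarith

lemma sq_sub_le_add_mul_two_mul_sq_sqrt_sub {r c : ℝ} (hr : 0 ≤ r) (hc : 0 ≤ c) :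
    (r - c) ^ 2 ≤ (r + c) * (2 * (√r - √c) ^ 2) := by
  have hsr := Real.sq_sqrt hr
  have hsc := Real.sq_sqrt hc
  have hfac : r - c = (√r - √c) * (√r + √c) := by linear_combination hsc - hsr
  calc (r - c) ^ 2 = (√r - √c) ^ 2 * (√r + √c) ^ 2 := by rw [hfac, mul_pow]
    _ ≤ (√r - √c) ^ 2 * (2 * (r + c)) := by gcongr; nlinarith [sq_nonneg (√r - √c)]
    _ = (r + c) * (2 * (√r - √c) ^ 2) := by ring

/-- The sum `∑ₖ f xₖ iₖ` along the trajectory `xₖ₊₁ = step xₖ iₖ` traced by `L.foldl step x`. -/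
def trajectorySum {α ι : Type*} (step : α → ι → α) (f : α → ι → ℝ) : List ι → α → ℝ
  | [], _ => 0
  | i :: L, x => f x i + trajectorySum step f L (step x i)

section trajectorySum

variable {α ι : Type*} {step : α → ι → α}

lemma trajectorySum_nonneg {f : α → ι → ℝ} (hf : ∀ x i, 0 ≤ f x i) :
    ∀ L x, 0 ≤ trajectorySum step f L x
  | [], _ => le_rfl
  | _ :: L, _ => add_nonneg (hf _ _) (trajectorySum_nonneg hf L _)

lemma trajectorySum_const_mul (a : ℝ) (f : α → ι → ℝ) :
    ∀ L x, trajectorySum step (fun x i => a * f x i) L x = a * trajectorySum step f L x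
  | [], _ => by simp [trajectorySum]
  | i :: L, x => by rw [trajectorySum, trajectorySum, trajectorySum_const_mul a f L, mul_add]

lemma foldl_eq_sub_trajectorySum {Φ : α → ℝ} {f : α → ι → ℝ}
    (hΦ : ∀ x i, Φ (step x i) = Φ x - f x i) :
    ∀ L x, Φ (L.foldl step x) = Φ x - trajectorySum step f L x
  | [], _ => by simp [trajectorySum]
  | i :: L, x => by
    rw [List.foldl_cons, foldl_eq_sub_trajectorySum hΦ L, hΦ, trajectorySum]
    ring

lemma sq_trajectorySum_le {f g h : α → ι → ℝ} (hg : ∀ x i, 0 ≤ g x i) (hh : ∀ x i, 0 ≤ h x i)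
    (hfgh : ∀ x i, f x i ^ 2 ≤ g x i * h x i) :
    ∀ L x, trajectorySum step f L x ^ 2
      ≤ trajectorySum step g L x * trajectorySum step h L x
  | [], _ => by simp [trajectorySum]
  | i :: L, x =>
    add_sq_le_add_mul_add (hg x i) (hh x i) (trajectorySum_nonneg hg L _)
      (trajectorySum_nonneg hh L _) (hfgh x i) (sq_trajectorySum_le hg hh hfgh L _)

end trajectorySum

lemma div_le_of_sq_le_mul_sub {D p q z ε : ℝ} (hp : 0 < p) (hpq : p ≤ q) (hz : 0 ≤ z)
    (hε0 : 0 < ε) (hε1 : ε < 1) (hqp : q - p ≤ z * p) (hD : D ^ 2 ≤ 16 * q * (q - p)) :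
    D / p ≤ ε + 10 * z / ε := by
  have hz2 : z ^ 2 ≤ z ^ 2 / ε ^ 2 := le_div_self (sq_nonneg z) (by positivity) (by nlinarith)
  have hbound : 16 * (z + z ^ 2) ≤ (ε + 10 * z / ε) ^ 2 := by
    have : (ε + 10 * z / ε) ^ 2 = ε ^ 2 + 20 * z + 100 * (z ^ 2 / ε ^ 2) := by
      field_simp; ring
    nlinarith
  have hq : q ≤ (1 + z) * p := by linarith
  rw [div_le_iff₀ hp]
  refine le_of_sq_le_sq ?_ (by positivity)
  calc D ^ 2 ≤ 16 * q * (q - p) := hD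
    _ ≤ 16 * ((1 + z) * p) * (z * p) := by gcongr
    _ = p ^ 2 * (16 * (z + z ^ 2)) := by ring
    _ ≤ p ^ 2 * (ε + 10 * z / ε) ^ 2 := by gcongr
    _ = ((ε + 10 * z / ε) * p) ^ 2 := by ring

lemma exists_drop_le_div (Φ : ℕ → ℝ) {K : ℕ} (hK : 1 ≤ K) :
    ∃ t ∈ range K, Φ t - Φ (t + 1) ≤ (Φ 0 - Φ K) / K := by
  refine exists_le_of_sum_le (nonempty_range_iff.2 (by omega)) ?_
  rw [sum_range_sub', sum_const, card_range, nsmul_eq_mul, mul_div_cancel₀]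
  exact_mod_cast (by omega : K ≠ 0)

lemma exists_div_le_of_sq_le_mul_sub (Φ D : ℕ → ℝ) (hΦ : ∀ k, 0 < Φ k)
    (hD : ∀ k, D (k + 1) ^ 2 ≤ 16 * Φ k * (Φ k - Φ (k + 1)))
    {ε : ℝ} (hε0 : 0 < ε) (hε1 : ε < 1) {K : ℕ} (hK : 1 ≤ K) :
    ∃ t ∈ Icc 1 K, D t / Φ t ≤ ε + 10 * Φ 0 / (ε * K * Φ K) := by
  have hanti : Antitone Φ := antitone_nat_of_succ_le fun k => by
    nlinarith [hD k, hΦ k, sq_nonneg (D (k + 1))]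
  obtain ⟨t, ht, hdrop⟩ := exists_drop_le_div Φ hK
  have htK : t + 1 ≤ K := mem_range.1 ht
  refine ⟨t + 1, mem_Icc.2 ⟨by omega, htK⟩, ?_⟩
  have hK0 : (0 : ℝ) < K := by exact_mod_cast (by omega : 0 < K)
  have hz : 0 ≤ Φ 0 / (K * Φ K) := div_nonneg (hΦ 0).le (mul_pos hK0 (hΦ K)).le
  rw [show 10 * Φ 0 / (ε * K * Φ K) = 10 * (Φ 0 / (K * Φ K)) / ε by field_simp]
  refine div_le_of_sq_le_mul_sub (hΦ _) (hanti t.le_succ) hz hε0 hε1 ?_ (hD t)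
  calc Φ t - Φ (t + 1) ≤ (Φ 0 - Φ K) / K := hdrop
    _ ≤ Φ 0 / (K * Φ K) * Φ K := by
      rw [div_mul_eq_mul_div, mul_div_mul_right _ _ (hΦ K).ne']
      gcongr; linarith [hΦ K]
    _ ≤ Φ 0 / (K * Φ K) * Φ (t + 1) := by gcongr; exact hanti htK

section SqrtRatio

variable {r c : ℝ}

lemma exp_half_mul_log_sub (hr : 0 < r) (hc : 0 < c) :
    exp (1 / 2 * (log c - log r)) = √c / √r := by
  rw [mul_sub, exp_sub, show 1 / 2 * log c = log √c by rw [log_sqrt hc.le]; ring,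
    show 1 / 2 * log r = log √r by rw [log_sqrt hr.le]; ring,
    exp_log (sqrt_pos.2 hc), exp_log (sqrt_pos.2 hr)]

lemma exists_sq_eq_of_pos (hr : 0 < r) : ∃ s, 0 < s ∧ s ^ 2 = r ∧ √r = s :=
  ⟨√r, sqrt_pos.2 hr, sq_sqrt hr.le, rfl⟩

lemma sqrt_div_sqrt_mul_eq (hr : 0 < r) (hc : 0 < c) :
    √c / √r * r = (√c / √r)⁻¹ * c := by
  obtain ⟨s, hs, rfl, hsr⟩ := exists_sq_eq_of_pos hr
  obtain ⟨t, ht, rfl, htc⟩ := exists_sq_eq_of_pos hc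
  rw [hsr, htc]
  field_simp

lemma sqrt_div_sqrt_sub_one_mul_add (hr : 0 < r) (hc : 0 < c) :
    (√c / √r - 1) * r + ((√c / √r)⁻¹ - 1) * c = -(√r - √c) ^ 2 := by
  obtain ⟨s, hs, rfl, hsr⟩ := exists_sq_eq_of_pos hr
  obtain ⟨t, ht, rfl, htc⟩ := exists_sq_eq_of_pos hc
  rw [hsr, htc]
  field_simp
  ring

lemma abs_sqrt_div_sqrt_sub_one_mul_add (hr : 0 < r) (hc : 0 < c) :
    |(√c / √r)⁻¹ - 1| * c + |√c / √r - 1| * r = |r - c| := by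
  obtain ⟨s, hs, rfl, hsr⟩ := exists_sq_eq_of_pos hr
  obtain ⟨t, ht, rfl, htc⟩ := exists_sq_eq_of_pos hc
  rw [hsr, htc, inv_div, div_sub_one ht.ne', div_sub_one hs.ne', abs_div, abs_div,
    abs_of_pos hs, abs_of_pos ht, sq_sub_sq, abs_mul, abs_of_pos (add_pos hs ht),
    abs_sub_comm t s]
  field_simp
  ring

end SqrtRatio

section OneUpdate

variable {n : ℕ} {A : Matrix (Fin n) (Fin n) ℝ}

lemma rowSum_nonneg (hA : ∀ i j, 0 ≤ A i j) (u : Fin n → ℝ) (j : Fin n) : 0 ≤ rowSum A u j :=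
  sum_nonneg fun _ _ => mul_nonneg (exp_pos _).le (hA _ _)

lemma colSum_nonneg (hA : ∀ i j, 0 ≤ A i j) (u : Fin n → ℝ) (j : Fin n) : 0 ≤ colSum A u j :=
  sum_nonneg fun _ _ => mul_nonneg (exp_pos _).le (hA _ _)

lemma rowSum_pos (hA : ∀ i j, 0 ≤ A i j) (hrow : ∀ j : Fin n, ∃ i, A j i ≠ 0)
    (u : Fin n → ℝ) (j : Fin n) : 0 < rowSum A u j := by
  obtain ⟨i, hi⟩ := hrow j
  exact sum_pos' (fun _ _ => mul_nonneg (exp_pos _).le (hA _ _))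
    ⟨i, mem_univ i, mul_pos (exp_pos _) ((hA j i).lt_of_ne' hi)⟩

lemma colSum_pos (hA : ∀ i j, 0 ≤ A i j) (hcol : ∀ j : Fin n, ∃ i, A i j ≠ 0)
    (u : Fin n → ℝ) (j : Fin n) : 0 < colSum A u j := by
  obtain ⟨i, hi⟩ := hcol j
  exact sum_pos' (fun _ _ => mul_nonneg (exp_pos _).le (hA _ _))
    ⟨i, mem_univ i, mul_pos (exp_pos _) ((hA i j).lt_of_ne' hi)⟩

lemma potential_eq_sum_rowSum (u : Fin n → ℝ) : potential A u = ∑ j, rowSum A u j := rfl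

lemma potential_eq_sum_colSum (u : Fin n → ℝ) : potential A u = ∑ j, colSum A u j :=
  sum_comm

lemma sum_rowSum_add_colSum (u : Fin n → ℝ) :
    ∑ j, (rowSum A u j + colSum A u j) = 2 * potential A u := by
  rw [sum_add_distrib, ← potential_eq_sum_rowSum, ← potential_eq_sum_colSum, two_mul]

lemma potential_nonneg (hA : ∀ i j, 0 ≤ A i j) (u : Fin n → ℝ) : 0 ≤ potential A u :=
  sum_nonneg fun j _ => rowSum_nonneg hA u j

lemma potential_pos (hA : ∀ i j, 0 ≤ A i j) (hrow : ∀ j : Fin n, ∃ i, A j i ≠ 0)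
    (hn : 0 < n) (u : Fin n → ℝ) : 0 < potential A u :=
  sum_pos (fun j _ => rowSum_pos hA hrow u j) ⟨⟨0, hn⟩, mem_univ _⟩

lemma sum_erase_mul_eq_colSum (hdiag : ∀ i, A i i = 0) (u : Fin n → ℝ) (m : Fin n) :
    ∑ j ∈ univ.erase m, exp (u j - u m) * A j m = colSum A u m := by
  rw [sum_erase _ (by simp [hdiag]), colSum]

lemma sum_erase_mul_eq_rowSum (hdiag : ∀ i, A i i = 0) (u : Fin n → ℝ) (m : Fin n) :
    ∑ j ∈ univ.erase m, exp (u m - u j) * A m j = rowSum A u m := by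
  rw [sum_erase _ (by simp [hdiag]), rowSum]

lemma rowSum_update_self (hdiag : ∀ i, A i i = 0) (u : Fin n → ℝ) (m : Fin n) (δ : ℝ) :
    rowSum A (Function.update u m (u m + δ)) m = exp δ * rowSum A u m := by
  rw [rowSum, rowSum, mul_sum]
  refine sum_congr rfl fun i _ => ?_
  rcases eq_or_ne i m with rfl | h
  · simp [hdiag]
  · rw [Function.update_self, Function.update_of_ne h, add_sub_right_comm, exp_add]
    ring

lemma colSum_update_self (hdiag : ∀ i, A i i = 0) (u : Fin n → ℝ) (m : Fin n) (δ : ℝ) :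
    colSum A (Function.update u m (u m + δ)) m = exp (-δ) * colSum A u m := by
  rw [colSum, colSum, mul_sum]
  refine sum_congr rfl fun i _ => ?_
  rcases eq_or_ne i m with rfl | h
  · simp [hdiag]
  · rw [Function.update_self, Function.update_of_ne h,
      show u i - (u m + δ) = -δ + (u i - u m) by ring, exp_add]
    ring

lemma rowSum_update_of_ne (u : Fin n → ℝ) (m : Fin n) (δ : ℝ) {j : Fin n} (hj : j ≠ m) :
    rowSum A (Function.update u m (u m + δ)) j
      = rowSum A u j + (exp (-δ) - 1) * (exp (u j - u m) * A j m) := by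
  rw [rowSum, rowSum, ← add_sum_erase _ _ (mem_univ m), ← add_sum_erase _ _ (mem_univ m),
    sum_congr rfl fun i hi => by
      rw [Function.update_of_ne hj, Function.update_of_ne (ne_of_mem_erase hi)],
    Function.update_self, Function.update_of_ne hj,
    show u j - (u m + δ) = -δ + (u j - u m) by ring, exp_add]
  ring

lemma colSum_update_of_ne (u : Fin n → ℝ) (m : Fin n) (δ : ℝ) {j : Fin n} (hj : j ≠ m) :
    colSum A (Function.update u m (u m + δ)) j
      = colSum A u j + (exp δ - 1) * (exp (u m - u j) * A m j) := by
  rw [colSum, colSum, ← add_sum_erase _ _ (mem_univ m), ← add_sum_erase _ _ (mem_univ m),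
    sum_congr rfl fun i hi => by
      rw [Function.update_of_ne hj, Function.update_of_ne (ne_of_mem_erase hi)],
    Function.update_self, Function.update_of_ne hj, add_sub_right_comm, exp_add]
  ring

lemma potential_update (hdiag : ∀ i, A i i = 0) (u : Fin n → ℝ) (m : Fin n) (δ : ℝ) :
    potential A (Function.update u m (u m + δ))
      = potential A u + (exp δ - 1) * rowSum A u m + (exp (-δ) - 1) * colSum A u m := by
  rw [potential_eq_sum_rowSum, potential_eq_sum_rowSum, ← add_sum_erase _ _ (mem_univ m),
    ← add_sum_erase _ (rowSum A u) (mem_univ m), rowSum_update_self hdiag,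
    sum_congr rfl fun j hj => rowSum_update_of_ne u m δ (ne_of_mem_erase hj),
    sum_add_distrib, ← mul_sum, sum_erase_mul_eq_colSum hdiag]
  ring

end OneUpdate

/-- `∑ j, imbalance A u j` is `‖∇φ(u)‖₁`. -/
noncomputable def imbalance {n : ℕ} (A : Matrix (Fin n) (Fin n) ℝ) (u : Fin n → ℝ)
    (j : Fin n) : ℝ :=
  |rowSum A u j - colSum A u j|

section OsborneUpdate

variable {n : ℕ} {A : Matrix (Fin n) (Fin n) ℝ}
  (hA : ∀ i j, 0 ≤ A i j) (hdiag : ∀ i, A i i = 0)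
  (hrow : ∀ j : Fin n, ∃ i, A j i ≠ 0) (hcol : ∀ j : Fin n, ∃ i, A i j ≠ 0)
include hA hdiag hrow hcol

lemma rowSum_osborneUpdate_self (u : Fin n → ℝ) (m : Fin n) :
    rowSum A (osborneUpdate A u m) m = colSum A (osborneUpdate A u m) m := by
  have hr := rowSum_pos hA hrow u m
  have hc := colSum_pos hA hcol u m
  rw [osborneUpdate, rowSum_update_self hdiag, colSum_update_self hdiag, exp_neg,
    exp_half_mul_log_sub hr hc, sqrt_div_sqrt_mul_eq hr hc]

lemma potential_osborneUpdate (u : Fin n → ℝ) (m : Fin n) :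
    potential A (osborneUpdate A u m)
      = potential A u - (√(rowSum A u m) - √(colSum A u m)) ^ 2 := by
  have hr := rowSum_pos hA hrow u m
  have hc := colSum_pos hA hcol u m
  rw [osborneUpdate, potential_update hdiag, exp_neg, exp_half_mul_log_sub hr hc, add_assoc,
    sqrt_div_sqrt_sub_one_mul_add hr hc, ← sub_eq_add_neg]

lemma sum_erase_abs_sub_osborneUpdate (u : Fin n → ℝ) (m : Fin n) :
    ∑ j ∈ univ.erase m, (|rowSum A (osborneUpdate A u m) j - rowSum A u j|
        + |colSum A (osborneUpdate A u m) j - colSum A u j|)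
      = imbalance A u m := by
  have hr := rowSum_pos hA hrow u m
  have hc := colSum_pos hA hcol u m
  have hterm : ∀ j ∈ univ.erase m,
      |rowSum A (osborneUpdate A u m) j - rowSum A u j|
        + |colSum A (osborneUpdate A u m) j - colSum A u j|
      = |(√(colSum A u m) / √(rowSum A u m))⁻¹ - 1| * (exp (u j - u m) * A j m)
        + |√(colSum A u m) / √(rowSum A u m) - 1| * (exp (u m - u j) * A m j) := by
    intro j hj
    have hjm := ne_of_mem_erase hj
    rw [osborneUpdate, rowSum_update_of_ne u m _ hjm, colSum_update_of_ne u m _ hjm, exp_neg,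
      exp_half_mul_log_sub hr hc, add_sub_cancel_left, add_sub_cancel_left,
      abs_mul _ (exp (u j - u m) * A j m), abs_mul _ (exp (u m - u j) * A m j),
      abs_of_nonneg (mul_nonneg (exp_pos _).le (hA j m)),
      abs_of_nonneg (mul_nonneg (exp_pos _).le (hA m j))]
  rw [sum_congr rfl hterm, sum_add_distrib, ← mul_sum, ← mul_sum, sum_erase_mul_eq_colSum hdiag,
    sum_erase_mul_eq_rowSum hdiag, abs_sqrt_div_sqrt_sub_one_mul_add hr hc, imbalance]

end OsborneUpdate

section OsborneCycle

variable {n : ℕ} {A : Matrix (Fin n) (Fin n) ℝ}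
  (hA : ∀ i j, 0 ≤ A i j) (hdiag : ∀ i, A i i = 0)
  (hrow : ∀ j : Fin n, ∃ i, A j i ≠ 0) (hcol : ∀ j : Fin n, ∃ i, A i j ≠ 0)
include hA hdiag hrow hcol

lemma sum_abs_sub_osborneUpdate_le {t : Finset (Fin n)} {m : Fin n} (hm : m ∉ t)
    (u : Fin n → ℝ) :
    ∑ j ∈ t, (|rowSum A (osborneUpdate A u m) j - rowSum A u j|
        + |colSum A (osborneUpdate A u m) j - colSum A u j|) ≤ imbalance A u m :=
  (sum_le_sum_of_subset_of_nonneg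
    (fun j hj => mem_erase.2 ⟨ne_of_mem_of_not_mem hj hm, mem_univ j⟩)
    (fun _ _ _ => by positivity)).trans
    (sum_erase_abs_sub_osborneUpdate hA hdiag hrow hcol u m).le

lemma sum_imbalance_osborneUpdate_le (t : Finset (Fin n)) (u : Fin n → ℝ) (m : Fin n) :
    ∑ j ∈ t, imbalance A (osborneUpdate A u m) j
      ≤ ∑ j ∈ t.erase m, imbalance A u j + imbalance A u m := by
  set v := osborneUpdate A u m
  have hpoint : ∀ j, imbalance A v j
      ≤ imbalance A u j + (|rowSum A v j - rowSum A u j| + |colSum A v j - colSum A u j|) := by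
    intro j
    have := abs_add_three (rowSum A u j - colSum A u j) (rowSum A v j - rowSum A u j)
      (colSum A u j - colSum A v j)
    rw [abs_sub_comm (colSum A u j)] at this
    rw [imbalance, imbalance, show rowSum A v j - colSum A v j = rowSum A u j - colSum A u j
      + (rowSum A v j - rowSum A u j) + (colSum A u j - colSum A v j) by ring]
    linarith
  calc ∑ j ∈ t, imbalance A v j = ∑ j ∈ t.erase m, imbalance A v j := by
        refine (sum_erase _ ?_).symm
        rw [imbalance, rowSum_osborneUpdate_self hA hdiag hrow hcol, sub_self, abs_zero]
    _ ≤ ∑ j ∈ t.erase m, (imbalance A u j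
          + (|rowSum A v j - rowSum A u j| + |colSum A v j - colSum A u j|)) :=
        sum_le_sum fun j _ => hpoint j
    _ ≤ _ := by
        rw [sum_add_distrib]
        gcongr
        exact sum_abs_sub_osborneUpdate_le hA hdiag hrow hcol (notMem_erase m t) u

lemma sum_rowSum_add_colSum_osborneUpdate_le {t : Finset (Fin n)} {m : Fin n} (hm : m ∉ t)
    (u : Fin n → ℝ) :
    ∑ j ∈ t, (rowSum A (osborneUpdate A u m) j + colSum A (osborneUpdate A u m) j)
      ≤ ∑ j ∈ t, (rowSum A u j + colSum A u j) + imbalance A u m := by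
  set v := osborneUpdate A u m
  calc ∑ j ∈ t, (rowSum A v j + colSum A v j)
      ≤ ∑ j ∈ t, ((rowSum A u j + colSum A u j)
          + (|rowSum A v j - rowSum A u j| + |colSum A v j - colSum A u j|)) :=
        sum_le_sum fun j _ => by
          linarith [le_abs_self (rowSum A v j - rowSum A u j),
            le_abs_self (colSum A v j - colSum A u j)]
    _ ≤ _ := by
        rw [sum_add_distrib]
        gcongr
        exact sum_abs_sub_osborneUpdate_le hA hdiag hrow hcol hm u

lemma sum_imbalance_foldl_osborneUpdate_le (s : Finset (Fin n)) :
    ∀ L u, ∑ j ∈ s, imbalance A (L.foldl (osborneUpdate A) u) j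
      ≤ ∑ j ∈ s \ L.toFinset, imbalance A u j
        + trajectorySum (osborneUpdate A) (imbalance A) L u
  | [], u => by simp [trajectorySum]
  | m :: L, u => by
    rw [List.foldl_cons, trajectorySum, List.toFinset_cons, sdiff_insert, ← add_assoc]
    exact (sum_imbalance_foldl_osborneUpdate_le s L _).trans (add_le_add_left
      (sum_imbalance_osborneUpdate_le hA hdiag hrow hcol _ u m) _)

lemma trajectorySum_rowSum_add_colSum_le :
    ∀ L u, L.Nodup →
      trajectorySum (osborneUpdate A) (fun u j => rowSum A u j + colSum A u j) L u
        ≤ ∑ j ∈ L.toFinset, (rowSum A u j + colSum A u j)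
          + trajectorySum (osborneUpdate A) (imbalance A) L u
  | [], u, _ => by simp [trajectorySum]
  | m :: L, u, hmL => by
    obtain ⟨hm, hL⟩ := List.nodup_cons.1 hmL
    rw [trajectorySum, trajectorySum, List.toFinset_cons,
      sum_insert (fun h => hm (List.mem_toFinset.1 h))]
    have hstep := sum_rowSum_add_colSum_osborneUpdate_le hA hdiag hrow hcol
      (fun h => hm (List.mem_toFinset.1 h)) u
    have := trajectorySum_rowSum_add_colSum_le L (osborneUpdate A u m) hL
    linarith

lemma sq_sum_imbalance_osborneCycle_le (u : Fin n → ℝ) :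
    (∑ j, imbalance A (osborneCycle A u) j) ^ 2
      ≤ 16 * potential A u * (potential A u - potential A (osborneCycle A u)) := by
  set L := List.finRange n
  set S := trajectorySum (osborneUpdate A) (imbalance A) L u
  set P := trajectorySum (osborneUpdate A) (fun u j => rowSum A u j + colSum A u j) L u
  set Δ := trajectorySum (osborneUpdate A)
    (fun u j => (√(rowSum A u j) - √(colSum A u j)) ^ 2) L u
  have hdescent : potential A (osborneCycle A u) = potential A u - Δ :=
    foldl_eq_sub_trajectorySum (potential_osborneUpdate hA hdiag hrow hcol) L u
  have himb : ∑ j, imbalance A (osborneCycle A u) j ≤ S := by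
    have := sum_imbalance_foldl_osborneUpdate_le hA hdiag hrow hcol univ L u
    rwa [show univ \ L.toFinset = ∅ by simp [L], sum_empty, zero_add] at this
  have hP : P ≤ 2 * potential A u + S := by
    simpa [L, sum_rowSum_add_colSum] using
      trajectorySum_rowSum_add_colSum_le hA hdiag hrow hcol L u (List.nodup_finRange n)
  have hCS : S ^ 2 ≤ P * (2 * Δ) := by
    rw [← trajectorySum_const_mul]
    exact sq_trajectorySum_le (fun u j => add_nonneg (rowSum_nonneg hA u j) (colSum_nonneg hA u j))
      (fun _ _ => by positivity)
      (fun u j => by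
        simpa only [imbalance, sq_abs] using
          sq_sub_le_add_mul_two_mul_sq_sqrt_sub (rowSum_nonneg hA u j) (colSum_nonneg hA u j))
      L u
  have hΔ : 0 ≤ Δ := trajectorySum_nonneg (fun _ _ => sq_nonneg _) L u
  have hΔΦ : Δ ≤ potential A u := by linarith [potential_nonneg hA (osborneCycle A u)]
  have hS : S ^ 2 ≤ 16 * potential A u * Δ := by
    nlinarith [sq_nonneg (S - 4 * Δ), mul_le_mul_of_nonneg_right hΔΦ hΔ]
  rw [hdescent, sub_sub_cancel]
  exact (pow_le_pow_left₀ (sum_nonneg fun j _ => abs_nonneg _) himb 2).trans hS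

end OsborneCycle

theorem osborne_one_batch_bound_general (n : ℕ) (A : Matrix (Fin n) (Fin n) ℝ)
    (hA : ∀ i j, 0 ≤ A i j) (hdiag : ∀ i, A i i = 0)
    (hrow : ∀ j : Fin n, ∃ i, A j i ≠ 0) (hcol : ∀ j : Fin n, ∃ i, A i j ≠ 0)
    (u0 : Fin n → ℝ) (eps' : ℝ) (heps0 : 0 < eps') (heps1 : eps' < 1)
    (K' : ℕ) (hK : 1 ≤ K') :
    ∃ t ∈ Finset.Icc 1 K',
      (∑ j, |rowSum A (osborneIter A u0 t) j - colSum A (osborneIter A u0 t) j|)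
          / potential A (osborneIter A u0 t)
        ≤ eps' + 10 * potential A u0
            / (eps' * K' * potential A (osborneIter A u0 K')) := by
  rcases Nat.eq_zero_or_pos n with rfl | hn
  · exact ⟨1, mem_Icc.2 ⟨le_rfl, hK⟩, by simp [potential]; positivity⟩
  have hcycle (k : ℕ) : osborneIter A u0 (k + 1) = osborneCycle A (osborneIter A u0 k) :=
    Function.iterate_succ_apply' _ _ _
  exact exists_div_le_of_sq_le_mul_sub (fun k => potential A (osborneIter A u0 k))
    (fun k => ∑ j, imbalance A (osborneIter A u0 k) j)
    (fun k => potential_pos hA hrow hn _)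
    (fun k => by
      simpa only [hcycle] using sq_sum_imbalance_osborneCycle_le hA hdiag hrow hcol _)
    heps0 heps1 hK

/-- Key one-batch bound: among the first K' cycles of Osborne's algorithm, some
end-of-cycle iterate u_t has normalized l1 imbalance at most
eps' + 10 φ(u_0) / (eps' K' φ(u_{K'})). -/
theorem osborne_one_batch_bound (n : ℕ) (A : Matrix (Fin n) (Fin n) ℝ)
    (hA : ∀ i j, 0 ≤ A i j) (hdiag : ∀ i, A i i = 0)
    (hrow : ∀ j : Fin n, ∃ i, A j i ≠ 0) (hcol : ∀ j : Fin n, ∃ i, A i j ≠ 0)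
    (hbal : ∃ u : Fin n → ℝ, ∀ i, rowSum A u i = colSum A u i)
    (u0 : Fin n → ℝ) (eps' : ℝ) (heps0 : 0 < eps') (heps1 : eps' < 1)
    (K' : ℕ) (hK : 1 ≤ K') :
    ∃ t ∈ Finset.Icc 1 K',
      (∑ j, |rowSum A (osborneIter A u0 t) j - colSum A (osborneIter A u0 t) j|)
          / potential A (osborneIter A u0 t)
        ≤ eps' + 10 * potential A u0
            / (eps' * K' * potential A (osborneIter A u0 K')) :=
  osborne_one_batch_bound_general n A hA hdiag hrow hcol u0 eps' heps0 heps1 K' hK
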